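/- arXiv:1108.3149 — 2 statements merged into one kernel-verified Lean document; each statement's English description precedes it below -/
import Mathlib

section
/- Let a < b be real numbers and let f : [a,b] → ℝ be absolutely continuous with f, f' ∈ L²(a,b). If f(a) = 0 or f(b) = 0, then ∫_a^b f(u)² du ≤ (4/π²)·(b−a)²·∫_a^b f'(u)² du. -/
/-!
Suppose `f a = 0`. Take `c = π / (2 (b - a))` and the weight `w u = cos (c (u - a))`, positive on
`[a, b)`, with `∫_a^x w = sin (c (x - a)) / c` and `∫_t^b ∫_a^x w dx = w t / c²` since
`cos (c (b - a)) = 0`. The weighted Cauchy–Schwarz inequality gives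
`f x ^ 2 ≤ (∫_a^x w) ∫_a^x f' ^ 2 / w`; integrating in `x` and exchanging the order of integration
turns the right-hand side into `c⁻² ∫_a^b f'²`, and `c⁻² = 4 (b - a)² / π²`. The case `f b = 0`
follows by the reflection `x ↦ a + b - x`. The argument runs in `ℝ≥0∞`, where Tonelli's theorem
needs no integrability.
-/

open MeasureTheory Real Set
open scoped ENNReal

theorem lintegral_sq_le_lintegral_mul_lintegral_sq_div {α : Type*} [MeasurableSpace α]
    {μ : Measure α} {w g : α → ℝ≥0∞} (hw : AEMeasurable w μ) (hg : AEMeasurable g μ)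
    (hw_pos : ∀ᵐ x ∂μ, w x ≠ 0 ∧ w x ≠ ⊤) :
    (∫⁻ x, g x ∂μ) ^ 2 ≤ (∫⁻ x, w x ∂μ) * ∫⁻ x, g x ^ 2 / w x ∂μ := by
  have hsq : ∀ y : ℝ≥0∞, (y ^ (1 / 2 : ℝ)) ^ 2 = y := fun y ↦ by
    rw [← ENNReal.rpow_natCast, ← ENNReal.rpow_mul]; norm_num
  have hsplit : g =ᵐ[μ] fun x ↦ w x ^ (1 / 2 : ℝ) * (g x / w x ^ (1 / 2 : ℝ)) := by
    filter_upwards [hw_pos] with x ⟨h0, htop⟩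
    rw [ENNReal.mul_div_cancel (by simpa using h0) (by simpa using htop)]
  have holder := ENNReal.lintegral_mul_le_Lp_mul_Lq μ Real.HolderConjugate.two_two
    (hw.pow_const (1 / 2 : ℝ)) (hg.div (hw.pow_const (1 / 2 : ℝ)))
  simp only [ENNReal.rpow_two, Pi.mul_apply, Pi.div_apply] at holder
  calc (∫⁻ x, g x ∂μ) ^ 2
      ≤ ((∫⁻ x, (w x ^ (1 / 2 : ℝ)) ^ 2 ∂μ) ^ (1 / 2 : ℝ) *
          (∫⁻ x, (g x / w x ^ (1 / 2 : ℝ)) ^ 2 ∂μ) ^ (1 / 2 : ℝ)) ^ 2 := by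
        rw [lintegral_congr_ae hsplit]; exact pow_le_pow_left₀ zero_le holder 2
    _ = (∫⁻ x, w x ∂μ) * ∫⁻ x, g x ^ 2 / w x ∂μ := by
        simp only [mul_pow, hsq]
        congr 1
        refine lintegral_congr fun x ↦ ?_
        rw [div_eq_mul_inv, mul_pow, ← ENNReal.inv_pow, hsq, ← div_eq_mul_inv]

theorem lintegral_Ioc_mul_lintegral_Ioc_swap {μ : Measure ℝ} [SFinite μ] {a b : ℝ}
    {V h : ℝ → ℝ≥0∞} (hV : AEMeasurable V (μ.restrict (Ioc a b)))
    (hh : AEMeasurable h (μ.restrict (Ioc a b))) :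
    ∫⁻ x in Ioc a b, V x * ∫⁻ t in Ioc a x, h t ∂μ ∂μ =
      ∫⁻ t in Ioc a b, h t * ∫⁻ x in Icc t b, V x ∂μ ∂μ := by
  have hG : AEMeasurable (Function.uncurry fun x t ↦ V x * (Iic x).indicator h t)
      ((μ.restrict (Ioc a b)).prod (μ.restrict (Ioc a b))) :=
    hV.comp_fst.mul (hh.comp_snd.indicator (measurableSet_le measurable_snd measurable_fst))
  calc ∫⁻ x in Ioc a b, V x * ∫⁻ t in Ioc a x, h t ∂μ ∂μ
      = ∫⁻ x in Ioc a b, ∫⁻ t in Ioc a b, V x * (Iic x).indicator h t ∂μ ∂μ := by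
        refine setLIntegral_congr_fun measurableSet_Ioc fun x hx ↦ ?_
        rw [lintegral_const_mul'' _ (hh.indicator measurableSet_Iic),
          lintegral_indicator measurableSet_Iic, Measure.restrict_restrict measurableSet_Iic,
          Iic_inter_Ioc_of_le hx.2]
    _ = ∫⁻ t in Ioc a b, ∫⁻ x in Ioc a b, V x * (Iic x).indicator h t ∂μ ∂μ :=
        lintegral_lintegral_swap hG
    _ = ∫⁻ t in Ioc a b, h t * ∫⁻ x in Icc t b, V x ∂μ ∂μ := by
        refine setLIntegral_congr_fun measurableSet_Ioc fun t ht ↦ ?_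
        have hslice : ∀ x, V x * (Iic x).indicator h t = h t * (Ici t).indicator V x := by
          intro x
          by_cases htx : t ≤ x <;> simp [indicator, htx, mul_comm]
        have hset : Ici t ∩ Ioc a b = Icc t b := by
          ext x
          simp only [mem_inter_iff, mem_Ici, mem_Ioc, mem_Icc]
          exact ⟨fun hx ↦ ⟨hx.1, hx.2.2⟩, fun hx ↦ ⟨hx.1, ht.1.trans_le hx.1, hx.2⟩⟩
        rw [lintegral_congr hslice, lintegral_const_mul'' _ (hV.indicator measurableSet_Ici),
          lintegral_indicator measurableSet_Ici, Measure.restrict_restrict measurableSet_Ici, hset]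

theorem lintegral_sq_le_of_le_lintegral_Ioc_of_weight {μ : Measure ℝ} [SFinite μ] {a b : ℝ}
    {K : ℝ≥0∞} {w F g : ℝ → ℝ≥0∞} (hw : AEMeasurable w (μ.restrict (Ioc a b)))
    (hw_pos : ∀ᵐ t ∂μ.restrict (Ioc a b), w t ≠ 0 ∧ w t ≠ ⊤)
    (hK : ∀ᵐ t ∂μ.restrict (Ioc a b), ∫⁻ x in Icc t b, ∫⁻ s in Ioc a x, w s ∂μ ∂μ ≤ K * w t)
    (hg : AEMeasurable g (μ.restrict (Ioc a b)))
    (hF : ∀ x ∈ Ioc a b, F x ≤ ∫⁻ t in Ioc a x, g t ∂μ) :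
    ∫⁻ x in Ioc a b, F x ^ 2 ∂μ ≤ K * ∫⁻ t in Ioc a b, g t ^ 2 ∂μ := by
  have hW : Monotone fun x ↦ ∫⁻ s in Ioc a x, w s ∂μ := fun x y hxy ↦
    lintegral_mono_set (Ioc_subset_Ioc_right hxy)
  calc ∫⁻ x in Ioc a b, F x ^ 2 ∂μ
      ≤ ∫⁻ x in Ioc a b, (∫⁻ s in Ioc a x, w s ∂μ) * ∫⁻ t in Ioc a x, g t ^ 2 / w t ∂μ ∂μ := by
        refine setLIntegral_mono' measurableSet_Ioc fun x hx ↦ ?_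
        have hsub : μ.restrict (Ioc a x) ≤ μ.restrict (Ioc a b) :=
          Measure.restrict_mono (Ioc_subset_Ioc_right hx.2) le_rfl
        exact (pow_le_pow_left₀ zero_le (hF x hx) 2).trans
          (lintegral_sq_le_lintegral_mul_lintegral_sq_div (hw.mono_measure hsub)
            (hg.mono_measure hsub) (ae_mono hsub hw_pos))
    _ = ∫⁻ t in Ioc a b, g t ^ 2 / w t * ∫⁻ x in Icc t b, ∫⁻ s in Ioc a x, w s ∂μ ∂μ ∂μ :=
        lintegral_Ioc_mul_lintegral_Ioc_swap hW.measurable.aemeasurable ((hg.pow_const 2).div hw)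
    _ ≤ ∫⁻ t in Ioc a b, K * g t ^ 2 ∂μ := by
        refine lintegral_mono_ae ?_
        filter_upwards [hw_pos, hK] with t ⟨h0, htop⟩ hKt
        calc g t ^ 2 / w t * ∫⁻ x in Icc t b, ∫⁻ s in Ioc a x, w s ∂μ ∂μ
            ≤ g t ^ 2 / w t * (K * w t) := by gcongr
          _ = K * g t ^ 2 := by
            rw [mul_left_comm, ENNReal.div_mul_cancel h0 htop]
    _ = K * ∫⁻ t in Ioc a b, g t ^ 2 ∂μ := lintegral_const_mul'' K (hg.pow_const 2)

theorem lintegral_Ioc_ofReal_eq_sub_of_hasDerivAt {f f' : ℝ → ℝ} {x y : ℝ} (hxy : x ≤ y)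
    (hf : ∀ s ∈ Icc x y, HasDerivAt f (f' s) s) (hf' : IntegrableOn f' (Ioc x y))
    (hf'_nonneg : ∀ s ∈ Ioc x y, 0 ≤ f' s) :
    ∫⁻ s in Ioc x y, ENNReal.ofReal (f' s) = ENNReal.ofReal (f y - f x) := by
  rw [← intervalIntegral.integral_eq_sub_of_hasDerivAt (by rwa [uIcc_of_le hxy])
    ((intervalIntegrable_iff_integrableOn_Ioc_of_le hxy).2 hf'),
    intervalIntegral.integral_of_le hxy, ofReal_integral_eq_lintegral_ofReal hf']
  exact ae_restrict_of_forall_mem measurableSet_Ioc hf'_nonneg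

theorem lintegral_Icc_lintegral_Ioc_cos {a b c : ℝ} (hc : 0 < c) (hcb : c * (b - a) = π / 2)
    {t : ℝ} (ht : t ∈ Icc a b) :
    ∫⁻ x in Icc t b, ∫⁻ s in Ioc a x, ENNReal.ofReal (cos (c * (s - a))) =
      ENNReal.ofReal (c⁻¹ ^ 2) * ENNReal.ofReal (cos (c * (t - a))) := by
  have harg : ∀ s ∈ Icc a b, c * (s - a) ∈ Icc 0 (π / 2) := fun s hs ↦
    ⟨by nlinarith [hs.1], hcb ▸ by nlinarith [hs.2]⟩
  have hderiv : ∀ s, HasDerivAt (fun s ↦ c * (s - a)) c s := fun s ↦ by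
    simpa using ((hasDerivAt_id s).sub_const a).const_mul c
  have hinner : ∀ x ∈ Icc a b, ∫⁻ s in Ioc a x, ENNReal.ofReal (cos (c * (s - a))) =
      ENNReal.ofReal (sin (c * (x - a)) / c) := by
    intro x hx
    rw [lintegral_Ioc_ofReal_eq_sub_of_hasDerivAt (f := fun s ↦ sin (c * (s - a)) / c) hx.1]
    · simp
    · intro s _
      exact ((hderiv s).sin.div_const c).congr_deriv (by field_simp)
    · exact (by fun_prop : Continuous fun s ↦ cos (c * (s - a))).integrableOn_Ioc
    · intro s hs
      have := harg s ⟨hs.1.le, hs.2.trans hx.2⟩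
      exact cos_nonneg_of_mem_Icc ⟨by linarith [this.1, pi_pos], this.2⟩
  rw [← Measure.restrict_congr_set Ioc_ae_eq_Icc,
    setLIntegral_congr_fun measurableSet_Ioc fun x hx ↦ hinner x ⟨ht.1.trans hx.1.le, hx.2⟩,
    lintegral_Ioc_ofReal_eq_sub_of_hasDerivAt (f := fun s ↦ -cos (c * (s - a)) / c ^ 2) ht.2,
    ← ENNReal.ofReal_mul (by positivity), hcb, cos_pi_div_two]
  · congr 1; ring
  · intro s _
    exact ((hderiv s).cos.neg.div_const (c ^ 2)).congr_deriv (by field_simp)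
  · exact (by fun_prop : Continuous fun s ↦ sin (c * (s - a)) / c).integrableOn_Ioc
  · intro s hs
    have := harg s ⟨ht.1.trans hs.1.le, hs.2⟩
    exact div_nonneg (sin_nonneg_of_nonneg_of_le_pi this.1 (by linarith [this.2, pi_pos])) hc.le

theorem lintegral_sq_le_of_le_lintegral_Ioc_left {a b : ℝ} (hab : a < b) {F g : ℝ → ℝ≥0∞}
    (hg : AEMeasurable g (volume.restrict (Ioc a b)))
    (hF : ∀ x ∈ Ioc a b, F x ≤ ∫⁻ t in Ioc a x, g t) :
    ∫⁻ x in Ioc a b, F x ^ 2 ≤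
      ENNReal.ofReal (4 / π ^ 2 * (b - a) ^ 2) * ∫⁻ t in Ioc a b, g t ^ 2 := by
  set c := π / (2 * (b - a)) with hc_def
  have hba : 0 < b - a := sub_pos.2 hab
  have hc : 0 < c := by positivity
  have hcb : c * (b - a) = π / 2 := by rw [hc_def]; field_simp
  have hK : c⁻¹ ^ 2 = 4 / π ^ 2 * (b - a) ^ 2 := by rw [hc_def, inv_div]; ring
  have hcos_pos : ∀ s ∈ Ioo a b, ENNReal.ofReal (cos (c * (s - a))) ≠ 0 := by
    intro s hs
    refine (ENNReal.ofReal_pos.2 (cos_pos_of_mem_Ioo ⟨?_, ?_⟩)).ne'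
    · nlinarith [hs.1, pi_pos]
    · rw [← hcb]; nlinarith [hs.2]
  rw [← hK]
  refine lintegral_sq_le_of_le_lintegral_Ioc_of_weight
    (w := fun s ↦ ENNReal.ofReal (cos (c * (s - a)))) (by fun_prop) ?_ ?_ hg hF
  · rw [← Measure.restrict_congr_set Ioo_ae_eq_Ioc]
    exact ae_restrict_of_forall_mem measurableSet_Ioo fun s hs ↦
      ⟨hcos_pos s hs, ENNReal.ofReal_ne_top⟩
  · exact ae_restrict_of_forall_mem measurableSet_Ioc fun t ht ↦
      (lintegral_Icc_lintegral_Ioc_cos hc hcb (Ioc_subset_Icc_self ht)).le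

theorem measurePreserving_sub_left_restrict_Ioc (c a b : ℝ) :
    MeasurePreserving (fun x ↦ c - x) (volume.restrict (Ioc a b))
      (volume.restrict (Ioc (c - b) (c - a))) := by
  have h := (Measure.measurePreserving_sub_left volume c).restrict_preimage_emb
    (MeasurableEquiv.subLeft c).measurableEmbedding (Ico (c - b) (c - a))
  rwa [preimage_const_sub_Ico, sub_sub_cancel, sub_sub_cancel,
    Measure.restrict_congr_set Ico_ae_eq_Ioc] at h

theorem lintegral_sq_le_of_le_lintegral_Ioc_right {a b : ℝ} (hab : a < b) {F g : ℝ → ℝ≥0∞}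
    (hg : AEMeasurable g (volume.restrict (Ioc a b)))
    (hF : ∀ x ∈ Ico a b, F x ≤ ∫⁻ t in Ioc x b, g t) :
    ∫⁻ x in Ioc a b, F x ^ 2 ≤
      ENNReal.ofReal (4 / π ^ 2 * (b - a) ^ 2) * ∫⁻ t in Ioc a b, g t ^ 2 := by
  have hemb := (MeasurableEquiv.subLeft (a + b)).measurableEmbedding
  have hρ : ∀ x, MeasurePreserving (fun t ↦ a + b - t) (volume.restrict (Ioc a x))
      (volume.restrict (Ioc (a + b - x) b)) := fun x ↦ by
    simpa using measurePreserving_sub_left_restrict_Ioc (a + b) a x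
  have hρb : MeasurePreserving (fun t ↦ a + b - t) (volume.restrict (Ioc a b))
      (volume.restrict (Ioc a b)) := by simpa using hρ b
  have hreflected := lintegral_sq_le_of_le_lintegral_Ioc_left hab (F := fun x ↦ F (a + b - x))
    (g := fun t ↦ g (a + b - t)) (hg.comp_quasiMeasurePreserving hρb.quasiMeasurePreserving)
    fun x hx ↦ by
      rw [(hρ x).lintegral_comp_emb hemb g]
      exact hF _ ⟨by linarith [hx.2], by linarith [hx.1]⟩
  rwa [hρb.lintegral_comp_emb hemb fun x ↦ F x ^ 2,
    hρb.lintegral_comp_emb hemb fun t ↦ g t ^ 2] at hreflected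

theorem integral_sq_le_of_lintegral_enorm_sq_le {α : Type*} [MeasurableSpace α] {μ : Measure α}
    {φ ψ : α → ℝ} {K : ℝ} (hK : 0 ≤ K) (hψ : Integrable (fun x ↦ ψ x ^ 2) μ)
    (h : ∫⁻ x, ‖φ x‖ₑ ^ 2 ∂μ ≤ ENNReal.ofReal K * ∫⁻ x, ‖ψ x‖ₑ ^ 2 ∂μ) :
    ∫ x, φ x ^ 2 ∂μ ≤ K * ∫ x, ψ x ^ 2 ∂μ := by
  have hψ' : ∫⁻ x, ‖ψ x‖ₑ ^ 2 ∂μ = ENNReal.ofReal (∫ x, ψ x ^ 2 ∂μ) := by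
    simpa [← enorm_pow] using (ofReal_integral_norm_eq_lintegral_enorm hψ).symm
  have hφ := enorm_integral_le_lintegral_enorm (μ := μ) fun x ↦ φ x ^ 2
  rw [Real.enorm_of_nonneg (integral_nonneg fun x ↦ sq_nonneg (φ x))] at hφ
  simp only [enorm_pow] at hφ
  rw [hψ', ← ENNReal.ofReal_mul hK] at h
  exact (ENNReal.ofReal_le_ofReal_iff (by positivity)).1 (hφ.trans h)

theorem wirtinger_inequality_general (a b : ℝ) (hab : a < b) (f f' : ℝ → ℝ)
    (hmem' : MemLp f' 2 (volume.restrict (Set.Ioc a b)))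
    (hac : ∀ x ∈ Set.Icc a b, f x - f a = ∫ u in a..x, f' u)
    (hzero : f a = 0 ∨ f b = 0) :
    ∫ u in a..b, (f u) ^ 2 ≤ 4 / π ^ 2 * (b - a) ^ 2 * ∫ u in a..b, (f' u) ^ 2 := by
  rw [intervalIntegral.integral_of_le hab.le, intervalIntegral.integral_of_le hab.le]
  refine integral_sq_le_of_lintegral_enorm_sq_le (by positivity) hmem'.integrable_sq ?_
  have hg : AEMeasurable (fun t ↦ ‖f' t‖ₑ) (volume.restrict (Ioc a b)) := hmem'.1.enorm
  rcases hzero with hfa | hfb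
  · refine lintegral_sq_le_of_le_lintegral_Ioc_left hab hg fun x hx ↦ ?_
    have hfx : f x = ∫ u in a..x, f' u := by rw [← hac x (Ioc_subset_Icc_self hx), hfa, sub_zero]
    rw [hfx, intervalIntegral.integral_of_le hx.1.le]
    exact enorm_integral_le_lintegral_enorm _
  · have hint : IntervalIntegrable f' volume a b :=
      (intervalIntegrable_iff_integrableOn_Ioc_of_le hab.le).2 (hmem'.integrable one_le_two)
    refine lintegral_sq_le_of_le_lintegral_Ioc_right hab hg fun x hx ↦ ?_
    have hfx : f x = -∫ u in x..b, f' u := by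
      rw [← intervalIntegral.integral_symm, ← intervalIntegral.integral_interval_sub_left
        (hint.mono_set (uIcc_subset_uIcc_left (mem_uIcc_of_le hx.1 hx.2.le))) hint,
        ← hac x (Ico_subset_Icc_self hx), ← hac b (right_mem_Icc.2 hab.le), hfb]
      ring
    rw [hfx, enorm_neg, intervalIntegral.integral_of_le hx.2.le]
    exact enorm_integral_le_lintegral_enorm _

/-- **Wirtinger's inequality.** If `f` is absolutely continuous on `[a,b]` with
(weak) derivative `f'`, both square integrable on `(a,b)`, and `f` vanishes at one
endpoint, then `∫_a^b f² ≤ (4/π²)(b-a)² ∫_a^b f'²`. -/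
theorem wirtinger_inequality (a b : ℝ) (hab : a < b) (f f' : ℝ → ℝ)
    (hmem : MemLp f 2 (volume.restrict (Set.Ioc a b)))
    (hmem' : MemLp f' 2 (volume.restrict (Set.Ioc a b)))
    (hac : ∀ x ∈ Set.Icc a b, f x - f a = ∫ u in a..x, f' u)
    (hzero : f a = 0 ∨ f b = 0) :
    ∫ u in a..b, (f u) ^ 2 ≤ 4 / π ^ 2 * (b - a) ^ 2 * ∫ u in a..b, (f' u) ^ 2 :=
  wirtinger_inequality_general a b hab f f' hmem' hac hzero
end

section
/- Let T > 0 and let (t_n)_{n∈ℤ} be a T-dense sequence. Then for every f ∈ H¹(ℝ) (identified with its continuous representative), the function V'f defined by (V'f)(t) = Σ_{n∈ℤ} f(s_{n+1})·1_{[t_n, t_{n+1})}(t), where s_n = (t_{n−1}+t_n)/2, belongs to L²(ℝ) and satisfies ‖V'f‖²_{L²} ≤ (T+1)·‖f‖²_{L²} + T·‖f'‖²_{L²} ≤ (T+1)·‖f‖²_{H¹}. In particular V' is a bounded linear operator from H¹(ℝ) to L²(ℝ). -/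
open MeasureTheory Real Filter

/-- `f ∈ H¹(ℝ)`, identified with its continuous representative. -/
structure MemH1 (f f' : ℝ → ℝ) : Prop where
  cont : Continuous f
  mem : MemLp f 2 (volume : Measure ℝ)
  mem' : MemLp f' 2 (volume : Measure ℝ)
  ftc : ∀ a b : ℝ, f b - f a = ∫ u in a..b, f' u

/-- A strictly increasing sequence `(t_n)` with `t_n → ±∞` is `T`-dense if
`t_{n+1} − t_n ≤ T` for all `n`. -/
structure TDense (T : ℝ) (t : ℤ → ℝ) : Prop where
  mono : StrictMono t
  top : Tendsto t atTop atTop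
  bot : Tendsto t atBot atBot
  dense : ∀ n : ℤ, t (n + 1) - t n ≤ T

/-- The midpoint `s_n = (t_{n−1} + t_n)/2`. -/
noncomputable def sPt (t : ℤ → ℝ) (n : ℤ) : ℝ := (t (n - 1) + t n) / 2

/-- The operator `(V'f)(x) = Σ_n f(s_{n+1})·1_{[t_n,t_{n+1})}(x)`. -/
noncomputable def V'op (t : ℤ → ℝ) (f : ℝ → ℝ) : ℝ → ℝ := fun x =>
  ∑' n : ℤ, Set.indicator (Set.Ico (t n) (t (n + 1))) (fun _ => f (sPt t (n + 1))) x


/-!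
On `[t_n, t_{n+1})` the function `V'f` is the constant `f(s_{n+1})`, and `s_{n+1}` lies in
`[t_n, t_{n+1}]`. Since `(f²)' = 2 f f'` and `|2 f f'| ≤ f² + f'²`, every `x` in that interval
satisfies `f(s_{n+1})² ≤ f(x)² + ∫_{t_n}^{t_{n+1}} (f² + f'²)`. Integrating in `x` over an
interval of length at most `T` bounds `∫ (V'f)²` on it by `∫ (f² + T (f² + f'²))` on it, and
these intervals partition `ℝ`.
-/

open Set Function

section FundamentalTheorem

open intervalIntegral

variable {f f' : ℝ → ℝ}

theorem eq_const_add_integral_of_sub_eq_integral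
    (hftc : ∀ a b : ℝ, f b - f a = ∫ u in a..b, f' u) (a : ℝ) :
    f = fun x => f a + ∫ u in a..x, f' u := by
  funext x
  linarith [hftc a x]

theorem absolutelyContinuousOnInterval_of_sub_eq_integral (hf' : LocallyIntegrable f' volume)
    (hftc : ∀ a b : ℝ, f b - f a = ∫ u in a..b, f' u) (a b : ℝ) :
    AbsolutelyContinuousOnInterval f a b := by
  rw [eq_const_add_integral_of_sub_eq_integral hftc a]
  exact contDiffOn_const.absolutelyContinuousOnInterval.add
    ((hf'.integrableOn_isCompact isCompact_uIcc).intervalIntegrable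
      |>.absolutelyContinuousOnInterval_intervalIntegral left_mem_uIcc)

theorem ae_hasDerivAt_of_sub_eq_integral (hf' : LocallyIntegrable f' volume)
    (hftc : ∀ a b : ℝ, f b - f a = ∫ u in a..b, f' u) :
    ∀ᵐ x, HasDerivAt f (f' x) x := by
  filter_upwards [LocallyIntegrable.ae_hasDerivAt_integral hf'] with x hx
  rw [eq_const_add_integral_of_sub_eq_integral hftc 0]
  exact (hx 0).const_add _

theorem sq_sub_sq_eq_integral_of_sub_eq_integral (hf' : LocallyIntegrable f' volume)
    (hftc : ∀ a b : ℝ, f b - f a = ∫ u in a..b, f' u) (a b : ℝ) :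
    f b ^ 2 - f a ^ 2 = ∫ u in a..b, 2 * f u * f' u := by
  have hac := absolutelyContinuousOnInterval_of_sub_eq_integral hf' hftc a b
  rw [sq, sq, ← hac.integral_deriv_mul_eq_sub hac]
  refine integral_congr_ae ?_
  filter_upwards [ae_hasDerivAt_of_sub_eq_integral hf' hftc] with x hx _
  rw [hx.deriv]
  ring

theorem sq_le_sq_add_integral_of_sub_eq_integral (hf' : LocallyIntegrable f' volume)
    (hftc : ∀ a b : ℝ, f b - f a = ∫ u in a..b, f' u) {a b x s : ℝ}
    (hint : IntervalIntegrable (fun u => f u ^ 2 + f' u ^ 2) volume a b)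
    (hx : x ∈ Icc a b) (hs : s ∈ Icc a b) :
    f s ^ 2 ≤ f x ^ 2 + ∫ u in a..b, (f u ^ 2 + f' u ^ 2) := by
  have key : ∀ {c d : ℝ}, a ≤ c → c ≤ d → d ≤ b →
      |f d ^ 2 - f c ^ 2| ≤ ∫ u in a..b, (f u ^ 2 + f' u ^ 2) := by
    intro c d hac hcd hdb
    have hint_cd : IntegrableOn (fun u => f u ^ 2 + f' u ^ 2) (Ioc c d) :=
      ((intervalIntegrable_iff_integrableOn_Ioc_of_le (hac.trans (hcd.trans hdb))).1 hint).mono_set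
        (Ioc_subset_Ioc hac hdb)
    rw [sq_sub_sq_eq_integral_of_sub_eq_integral hf' hftc]
    calc |∫ u in c..d, 2 * f u * f' u| ≤ ∫ u in c..d, |2 * f u * f' u| :=
          abs_integral_le_integral_abs hcd
      _ ≤ ∫ u in c..d, (f u ^ 2 + f' u ^ 2) := by
          rw [integral_of_le hcd, integral_of_le hcd]
          refine integral_mono_of_nonneg (ae_of_all _ fun u => abs_nonneg _) hint_cd
            (ae_of_all _ fun u => abs_le.2 ⟨?_, ?_⟩)
          · nlinarith [sq_nonneg (f u + f' u)]
          · nlinarith [sq_nonneg (f u - f' u)]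
      _ ≤ ∫ u in a..b, (f u ^ 2 + f' u ^ 2) :=
          integral_mono_interval hac hcd hdb (ae_of_all _ fun u => by positivity) hint
  rcases le_total x s with hxs | hsx
  · linarith [le_abs_self (f s ^ 2 - f x ^ 2), key hx.1 hxs hs.2]
  · linarith [neg_abs_le (f x ^ 2 - f s ^ 2), key hs.1 hsx hx.2]

end FundamentalTheorem

theorem integrable_and_integral_le_of_iUnion_eq_univ {α ι : Type*} [MeasurableSpace α]
    [Countable ι] {μ : Measure α} {s : ι → Set α} (hs : ∀ i, MeasurableSet (s i))
    (hd : Pairwise (Disjoint on s)) (hU : ⋃ i, s i = univ) {g F : α → ℝ} (hg0 : 0 ≤ g)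
    (hg : ∀ i, IntegrableOn g (s i) μ) (hF : Integrable F μ)
    (hle : ∀ i, ∫ x in s i, g x ∂μ ≤ ∫ x in s i, F x ∂μ) :
    Integrable g μ ∧ ∫ x, g x ∂μ ≤ ∫ x, F x ∂μ := by
  have hF_sum := hasSum_integral_iUnion hs hd (by rw [hU]; exact hF.integrableOn)
  have hg_summable : Summable fun i => ∫ x in s i, ‖g x‖ ∂μ := by
    refine hF_sum.summable.of_nonneg_of_le (fun i => integral_nonneg fun x => norm_nonneg _)
      fun i => ?_
    simpa only [Real.norm_of_nonneg (hg0 _)] using hle i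
  have hgi : Integrable g μ := by
    simpa only [hU, integrableOn_univ] using integrableOn_iUnion_of_summable_integral_norm hg
      hg_summable
  refine ⟨hgi, ?_⟩
  have hg_sum := hasSum_integral_iUnion hs hd (by rw [hU]; exact hgi.integrableOn)
  simpa only [hU, Measure.restrict_univ] using hasSum_le hle hg_sum hF_sum

section Partition

variable {t : ℤ → ℝ}

theorem pairwise_disjoint_Ico_succ (hmono : Monotone t) :
    Pairwise (Disjoint on fun n => Ico (t n) (t (n + 1))) := by
  simpa only [Order.succ_eq_add_one] using hmono.pairwise_disjoint_on_Ico_succ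

theorem iUnion_Ico_succ_eq_univ (htop : Tendsto t atTop atTop) (hbot : Tendsto t atBot atBot) :
    ⋃ n, Ico (t n) (t (n + 1)) = univ := by
  refine eq_univ_of_forall fun x => mem_iUnion.2 ?_
  obtain ⟨N, hN⟩ := eventually_atTop.1 (htop.eventually (eventually_gt_atTop x))
  have hbdd : ∀ n, t n ≤ x → n ≤ N := fun n hn => by
    by_contra! h
    exact (hN n h.le).not_ge hn
  obtain ⟨n, hn, hmax⟩ :=
    Int.exists_greatest_of_bdd ⟨N, hbdd⟩ (hbot.eventually (eventually_le_atBot x)).exists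
  exact ⟨n, hn, lt_of_not_ge fun h => (hmax (n + 1) h).not_gt (lt_add_one n)⟩

theorem V'op_eq_of_mem_Ico (hmono : Monotone t) (f : ℝ → ℝ) {n : ℤ} {x : ℝ}
    (hx : x ∈ Ico (t n) (t (n + 1))) : V'op t f x = f (sPt t (n + 1)) := by
  rw [V'op, tsum_eq_single n fun m hm =>
    indicator_of_notMem (fun hxm => disjoint_left.1 (pairwise_disjoint_Ico_succ hmono hm) hxm hx) _]
  exact indicator_of_mem hx _

theorem sPt_succ_mem_Icc {n : ℤ} (h : t n ≤ t (n + 1)) :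
    sPt t (n + 1) ∈ Icc (t n) (t (n + 1)) := by
  simp only [sPt, add_sub_cancel_right]
  constructor <;> linarith

theorem aestronglyMeasurable_V'op (hmono : Monotone t) (hU : ⋃ n, Ico (t n) (t (n + 1)) = univ)
    (f : ℝ → ℝ) : AEStronglyMeasurable (V'op t f) volume := by
  rw [← Measure.restrict_univ (μ := volume), ← hU, aestronglyMeasurable_iUnion_iff]
  exact fun n => aestronglyMeasurable_const.congr <| (ae_restrict_iff' measurableSet_Ico).2 <|
    ae_of_all _ fun x hx => (V'op_eq_of_mem_Ico hmono f hx).symm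

theorem integrableOn_V'op_sq_Ico (hmono : Monotone t) (f : ℝ → ℝ) (n : ℤ) :
    IntegrableOn (fun x => V'op t f x ^ 2) (Ico (t n) (t (n + 1))) := by
  refine (integrableOn_const measure_Ico_lt_top.ne (C := f (sPt t (n + 1)) ^ 2)).congr_fun
    (fun x hx => ?_) measurableSet_Ico
  rw [V'op_eq_of_mem_Ico hmono f hx]

theorem setIntegral_V'op_sq_le {T : ℝ} (ht : TDense T t) {f f' : ℝ → ℝ} (hf : MemH1 f f')
    (n : ℤ) :
    ∫ x in Ico (t n) (t (n + 1)), V'op t f x ^ 2 ≤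
      ∫ x in Ico (t n) (t (n + 1)), ((T + 1) * f x ^ 2 + T * f' x ^ 2) := by
  set I := Ico (t n) (t (n + 1))
  set B := ∫ u in t n..t (n + 1), (f u ^ 2 + f' u ^ 2) with hBdef
  have hle : t n ≤ t (n + 1) := ht.mono.monotone (by omega)
  have hint : Integrable fun u => f u ^ 2 + f' u ^ 2 :=
    hf.mem.integrable_sq.add hf.mem'.integrable_sq
  have hf2 : IntegrableOn (fun x => f x ^ 2) I := hf.mem.integrable_sq.integrableOn
  have hB : B = ∫ x in I, (f x ^ 2 + f' x ^ 2) := by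
    rw [hBdef, intervalIntegral.integral_of_le hle, integral_Ico_eq_integral_Ioc]
  have hB0 : 0 ≤ B := intervalIntegral.integral_nonneg hle fun u _ => by positivity
  calc ∫ x in I, V'op t f x ^ 2 ≤ ∫ x in I, (f x ^ 2 + B) := by
        refine setIntegral_mono_on (integrableOn_V'op_sq_Ico ht.mono.monotone f n)
          (hf2.add (integrableOn_const measure_Ico_lt_top.ne)) measurableSet_Ico fun x hx => ?_
        rw [V'op_eq_of_mem_Ico ht.mono.monotone f hx]
        exact sq_le_sq_add_integral_of_sub_eq_integral (hf.mem'.locallyIntegrable one_le_two)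
          hf.ftc hint.intervalIntegrable (Ico_subset_Icc_self hx) (sPt_succ_mem_Icc hle)
    _ = (∫ x in I, f x ^ 2) + (t (n + 1) - t n) * B := by
        rw [integral_add hf2 (integrableOn_const measure_Ico_lt_top.ne), setIntegral_const,
          smul_eq_mul, Real.volume_real_Ico_of_le hle]
    _ ≤ (∫ x in I, f x ^ 2) + T * B := by gcongr; exact ht.dense n
    _ = ∫ x in I, ((T + 1) * f x ^ 2 + T * f' x ^ 2) := by
        rw [hB, ← integral_const_mul, ← integral_add hf2 (hint.integrableOn.const_mul T)]
        congr 1 with x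
        ring

end Partition

theorem V'op_bounded_general (T : ℝ) (t : ℤ → ℝ) (ht : TDense T t)
    (f f' : ℝ → ℝ) (hf : MemH1 f f') :
    MemLp (V'op t f) 2 (volume : Measure ℝ) ∧
    (∫ x : ℝ, (V'op t f x) ^ 2) ≤
      (T + 1) * (∫ x : ℝ, (f x) ^ 2) + T * (∫ x : ℝ, (f' x) ^ 2) ∧
    (T + 1) * (∫ x : ℝ, (f x) ^ 2) + T * (∫ x : ℝ, (f' x) ^ 2) ≤
      (T + 1) * ((∫ x : ℝ, (f x) ^ 2) + ∫ x : ℝ, (f' x) ^ 2) := by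
  have hU := iUnion_Ico_succ_eq_univ ht.top ht.bot
  have hf2 := hf.mem.integrable_sq.const_mul (T + 1)
  have hf'2 := hf.mem'.integrable_sq.const_mul T
  have hF : Integrable fun x => (T + 1) * f x ^ 2 + T * f' x ^ 2 := hf2.add hf'2
  obtain ⟨hint, hle⟩ := integrable_and_integral_le_of_iUnion_eq_univ (fun _ => measurableSet_Ico)
    (pairwise_disjoint_Ico_succ ht.mono.monotone) hU (fun x => sq_nonneg (V'op t f x))
    (integrableOn_V'op_sq_Ico ht.mono.monotone f) hF (setIntegral_V'op_sq_le ht hf)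
  rw [integral_add hf2 hf'2, integral_const_mul, integral_const_mul] at hle
  refine ⟨(memLp_two_iff_integrable_sq (aestronglyMeasurable_V'op ht.mono.monotone hU f)).2 hint,
    hle, ?_⟩
  have hf'_nonneg : 0 ≤ ∫ x, f' x ^ 2 := integral_nonneg fun x => sq_nonneg (f' x)
  linarith

/-- If `(t_n)` is `T`-dense then `V'` is a bounded operator from `H¹(ℝ)` to `L²(ℝ)`:
`‖V'f‖²_{L²} ≤ (T+1)‖f‖²_{L²} + T‖f'‖²_{L²} ≤ (T+1)‖f‖²_{H¹}`. -/
theorem V'op_bounded (T : ℝ) (hT : 0 < T) (t : ℤ → ℝ) (ht : TDense T t)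
    (f f' : ℝ → ℝ) (hf : MemH1 f f') :
    MemLp (V'op t f) 2 (volume : Measure ℝ) ∧
    (∫ x : ℝ, (V'op t f x) ^ 2) ≤
      (T + 1) * (∫ x : ℝ, (f x) ^ 2) + T * (∫ x : ℝ, (f' x) ^ 2) ∧
    (T + 1) * (∫ x : ℝ, (f x) ^ 2) + T * (∫ x : ℝ, (f' x) ^ 2) ≤
      (T + 1) * ((∫ x : ℝ, (f x) ^ 2) + ∫ x : ℝ, (f' x) ^ 2) :=
  V'op_bounded_general T t ht f f' hf
end
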